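/- Let G be a simple graph on a vertex type V and let k ≥ 1 be a natural number. Define the simple graph G′ on (V × Fin (k+1)) ⊕ Fin k with the following edges: for each 0 ≤ i < k, an edge between (v,i) and (v,i+1) for every v; an edge between (u,i) and (v,i+1) whenever u and v are adjacent in G; an edge between s_i and (v,i) and between s_i and (v,i+1) for every v and every i < k (where s_i denotes the i-th vertex of the Fin k summand); and an edge between s_i and s_{i+1} for every i < k−1. Then for all u, v ∈ V, the extended shortest-path distance in G′ satisfies edist_{G′}((u,0), (v,k)) = max(min(edist_G(u,v), k+1), k), where edist denotes distance in ℕ∞ (taking the value ∞ for unreachable pairs). -/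

import Mathlib

/-- The layered graph of Lemma 4.3: `k+1` copies of the vertex set of `G`
(the layers), lazy edges `(v,i)–(v,i+1)`, edges `(u,i)–(v,i+1)` mirroring the
edges of `G`, and helper vertices `s_0, …, s_{k-1}` where `s_i` is joined to
all of layers `i` and `i+1` and to `s_{i+1}`. -/
def layeredGraph {V : Type*} (G : SimpleGraph V) (k : ℕ) :
    SimpleGraph ((V × Fin (k + 1)) ⊕ Fin k) :=
  SimpleGraph.fromRel (fun a b =>
    match a, b with
    | Sum.inl (u, i), Sum.inl (v, j) =>
        (j : ℕ) = (i : ℕ) + 1 ∧ (u = v ∨ G.Adj u v)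
    | Sum.inr s, Sum.inl (_, j) => (j : ℕ) = (s : ℕ) ∨ (j : ℕ) = (s : ℕ) + 1
    | Sum.inr s, Sum.inr s' => (s' : ℕ) = (s : ℕ) + 1
    | _, _ => False)


/-!
Every edge of `layeredGraph G k` changes the layer (`i` for `(v, i)` and for `s_i`) by at most one,
so a walk from layer `0` to layer `k` has length at least `k`, and if its length is exactly `k` it
climbs one layer per step. Such a walk cannot visit a helper vertex, since `s_i` only sees layers
`i` and `i + 1`, so it projects to a walk of `G` with some lazy steps: hence length `k` forces
`G.edist u v ≤ k`. Conversely a `G`-walk of length at most `k` lifts, padded with lazy edges, and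
the helper path `(u, 0), s_0, …, s_{k-1}, (v, k)` always has length `k + 1`.
-/

open SimpleGraph Sum

namespace SimpleGraph

variable {α : Type*} {H : SimpleGraph α}

lemma Walk.apply_le_apply_add_length (f : α → ℕ) (hf : ∀ a b, H.Adj a b → f b ≤ f a + 1)
    {a b : α} (p : H.Walk a b) : f b ≤ f a + p.length := by
  induction p with
  | nil => simp
  | cons h _ ih => have := hf _ _ h; rw [Walk.length_cons]; omega

lemma apply_le_apply_add_edist (f : α → ℕ) (hf : ∀ a b, H.Adj a b → f b ≤ f a + 1) (a b : α) :
    (f b : ℕ∞) ≤ f a + H.edist a b := by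
  by_cases hab : H.edist a b = ⊤
  · simp [hab]
  obtain ⟨p, hp⟩ := exists_walk_of_edist_ne_top hab
  rw [← hp]
  exact_mod_cast p.apply_le_apply_add_length f hf

end SimpleGraph

namespace layeredGraph

variable {V : Type*} {G : SimpleGraph V} {k : ℕ}

def layer : (V × Fin (k + 1)) ⊕ Fin k → ℕ
  | inl (_, i) => i
  | inr s => s

lemma layer_le_layer_add_one {a b : (V × Fin (k + 1)) ⊕ Fin k}
    (h : (layeredGraph G k).Adj a b) : layer b ≤ layer a + 1 := by
  obtain ⟨-, h | h⟩ := h <;>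
    rcases a with ⟨u, i⟩ | s <;> rcases b with ⟨v, j⟩ | t <;> simp only [layer] at h ⊢ <;> omega

lemma adj_inl_inl {u v : V} {i j : Fin (k + 1)} (hij : (j : ℕ) = i + 1) (huv : u = v ∨ G.Adj u v) :
    (layeredGraph G k).Adj (inl (u, i)) (inl (v, j)) :=
  ⟨by simp [Fin.ext_iff]; omega, .inl ⟨hij, huv⟩⟩

lemma adj_inr_inl (s : Fin k) (v : V) {j : Fin (k + 1)} (hj : (j : ℕ) = s ∨ (j : ℕ) = s + 1) :
    (layeredGraph G k).Adj (inr s) (inl (v, j)) :=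
  ⟨by simp, .inl hj⟩

lemma adj_inr_inr {s t : Fin k} (hst : (t : ℕ) = s + 1) :
    (layeredGraph G k).Adj (inr s) (inr t) :=
  ⟨by simp [Fin.ext_iff]; omega, .inl hst⟩

lemma exists_eq_inl_of_adj_of_layer_eq {u : V} {i : Fin (k + 1)} {c : (V × Fin (k + 1)) ⊕ Fin k}
    (h : (layeredGraph G k).Adj (inl (u, i)) c) (hc : layer c = i + 1) :
    ∃ w j, c = inl (w, j) ∧ (u = w ∨ G.Adj u w) := by
  obtain ⟨-, h | h⟩ := h <;> rcases c with ⟨w, j⟩ | s <;> simp only [layer] at h hc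
  · exact ⟨w, j, rfl, h.2⟩
  all_goals omega

lemma edist_le_length_of_layer_eq_add_length {a b : (V × Fin (k + 1)) ⊕ Fin k}
    (p : (layeredGraph G k).Walk a b)
    {u v : V} {i j : Fin (k + 1)} (ha : a = inl (u, i)) (hb : b = inl (v, j))
    (hp : (j : ℕ) = i + p.length) : G.edist u v ≤ p.length := by
  induction p generalizing u i with
  | nil =>
    obtain ⟨rfl, -⟩ := Prod.ext_iff.mp (inl_injective (ha.symm.trans hb))
    simp
  | @cons a c b h q ih =>
    subst ha hb
    have hc : layer c = i + 1 := by
      have := q.apply_le_apply_add_length layer (fun _ _ => layer_le_layer_add_one)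
      have := layer_le_layer_add_one h
      simp only [layer, Walk.length_cons] at *
      omega
    obtain ⟨w, i', rfl, huw⟩ := exists_eq_inl_of_adj_of_layer_eq h hc
    simp only [layer] at hc
    calc G.edist u v ≤ G.edist u w + G.edist w v := SimpleGraph.edist_triangle
      _ ≤ 1 + q.length := by
        gcongr
        · exact edist_le_one_iff_adj_or_eq.mpr huw.symm
        · exact ih rfl rfl (by rw [Walk.length_cons] at hp; omega)
      _ = (q.cons h).length := by rw [Walk.length_cons]; push_cast; ring

lemma edist_inl_inl_le_of_walk {u v : V} (q : G.Walk u v) {i j : Fin (k + 1)}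
    (hq : (i : ℕ) + q.length ≤ j) :
    (layeredGraph G k).edist (inl (u, i)) (inl (v, j)) ≤ ((j - i : ℕ) : ℕ∞) := by
  obtain ⟨n, hn⟩ := Nat.exists_eq_add_of_le (le_of_add_le_left hq)
  induction n generalizing u i with
  | zero =>
    obtain rfl : i = j := Fin.ext (by omega)
    obtain rfl : u = v := q.eq_of_length_eq_zero (by omega)
    simp
  | succ n ih =>
    have hi : (i : ℕ) + 1 < k + 1 := by omega
    obtain ⟨w, huw, q', hq'⟩ : ∃ w, (u = w ∨ G.Adj u w) ∧ ∃ q' : G.Walk w v, q'.length ≤ n := by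
      cases q with
      | nil => exact ⟨_, .inl rfl, .nil, by simp⟩
      | cons h q' => exact ⟨_, .inr h, q', by simp at hq; omega⟩
    calc (layeredGraph G k).edist (inl (u, i)) (inl (v, j))
        ≤ (layeredGraph G k).edist (inl (u, i)) (inl (w, ⟨i + 1, hi⟩))
          + (layeredGraph G k).edist (inl (w, ⟨i + 1, hi⟩)) (inl (v, j)) :=
        SimpleGraph.edist_triangle
      _ ≤ 1 + ((j - (i + 1) : ℕ) : ℕ∞) := by
        gcongr
        · exact (edist_eq_one_iff_adj.mpr (adj_inl_inl rfl huw)).le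
        · exact ih q' (by dsimp only; omega) (by dsimp only; omega)
      _ = ((j - i : ℕ) : ℕ∞) := by norm_cast; omega

lemma edist_inr_inr_le {s t : Fin k} (hst : s ≤ t) :
    (layeredGraph G k).edist (inr s) (inr t) ≤ ((t - s : ℕ) : ℕ∞) := by
  obtain ⟨n, hn⟩ := Nat.exists_eq_add_of_le (Fin.le_iff_val_le_val.mp hst)
  induction n generalizing s with
  | zero => obtain rfl : s = t := Fin.ext (by omega); simp
  | succ n ih =>
    have hs : (s : ℕ) + 1 < k := by omega
    calc (layeredGraph G k).edist (inr s) (inr t)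
        ≤ (layeredGraph G k).edist (inr s) (inr ⟨s + 1, hs⟩)
          + (layeredGraph G k).edist (inr ⟨s + 1, hs⟩) (inr t) :=
        SimpleGraph.edist_triangle
      _ ≤ 1 + ((t - (s + 1) : ℕ) : ℕ∞) := by
        gcongr
        · exact (edist_eq_one_iff_adj.mpr (adj_inr_inr rfl)).le
        · exact ih (Fin.le_iff_val_le_val.mpr (by dsimp only; omega)) (by dsimp only; omega)
      _ = ((t - s : ℕ) : ℕ∞) := by norm_cast; omega

lemma edist_inl_zero_inl_last_le (hk : 1 ≤ k) (u v : V) :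
    (layeredGraph G k).edist (inl (u, 0)) (inl (v, Fin.last k)) ≤ k + 1 := by
  let s₀ : Fin k := ⟨0, hk⟩
  let sₗ : Fin k := ⟨k - 1, by omega⟩
  calc (layeredGraph G k).edist (inl (u, 0)) (inl (v, Fin.last k))
      ≤ (layeredGraph G k).edist (inl (u, 0)) (inr s₀)
        + (layeredGraph G k).edist (inr s₀) (inr sₗ)
        + (layeredGraph G k).edist (inr sₗ) (inl (v, Fin.last k)) :=
      SimpleGraph.edist_triangle.trans (add_le_add_left SimpleGraph.edist_triangle _)
    _ ≤ 1 + ((k - 1 : ℕ) : ℕ∞) + 1 := by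
      gcongr
      · rw [edist_comm]
        exact (edist_eq_one_iff_adj.mpr (adj_inr_inl s₀ u (.inl rfl))).le
      · exact edist_inr_inr_le (Fin.le_iff_val_le_val.mpr (Nat.zero_le _))
      · exact (edist_eq_one_iff_adj.mpr (adj_inr_inl sₗ v (.inr (by simp [sₗ]; omega)))).le
    _ = k + 1 := by norm_cast; omega

end layeredGraph

open layeredGraph in
theorem stmt_9 {V : Type*} (G : SimpleGraph V) (k : ℕ) (hk : 1 ≤ k)
    (u v : V) :
    (layeredGraph G k).edist (Sum.inl (u, 0)) (Sum.inl (v, Fin.last k))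
      = max (min (G.edist u v) ((k : ℕ∞) + 1)) (k : ℕ∞) := by
  set d := (layeredGraph G k).edist (Sum.inl (u, 0)) (Sum.inl (v, Fin.last k))
  have hk_le : (k : ℕ∞) ≤ d := by
    simpa [layer] using apply_le_apply_add_edist layer (fun _ _ => layer_le_layer_add_one)
      (inl (u, 0) : (V × Fin (k + 1)) ⊕ Fin k) (inl (v, Fin.last k))
  have hle_succ : d ≤ k + 1 := edist_inl_zero_inl_last_le hk u v
  have hle_iff : d ≤ k ↔ G.edist u v ≤ k := by
    constructor
    · intro hd
      obtain ⟨p, hp⟩ := exists_walk_of_edist_eq_coe (le_antisymm hd hk_le)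
      simpa [hp] using edist_le_length_of_layer_eq_add_length p rfl rfl (by simp [hp])
    · intro huv
      obtain ⟨q, hq⟩ :=
        exists_walk_of_edist_ne_top (ne_top_of_le_ne_top (ENat.natCast_ne_top k) huv)
      have : q.length ≤ k := by exact_mod_cast hq ▸ huv
      simpa using edist_inl_inl_le_of_walk q (i := 0) (j := Fin.last k) (by simpa)
  rcases le_or_gt (G.edist u v) k with huv | huv
  · rw [min_eq_left (huv.trans le_self_add), max_eq_right huv]
    exact le_antisymm (hle_iff.mpr huv) hk_le
  · have hk_lt : (k : ℕ∞) < d := lt_of_not_ge (mt hle_iff.mp huv.not_ge)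
    rw [min_eq_right (Order.add_one_le_of_lt huv), max_eq_left le_self_add]
    exact le_antisymm hle_succ (Order.add_one_le_of_lt hk_lt)
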